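/- Let s be a weak composition, T an s-decreasing tree, and (a,b) a tree ascent of T with s(a) = 0, and let Z be the s-tree rotation of T along (a,b). Then A_T(a,b) = {(b,a)}. -/

import Mathlib

open scoped Classical

/-- An `s`-decreasing tree with internal vertices `1,…,n` (the root is `n`), encoded by
recording, for each non-root internal vertex `v`, its parent `parent v` (an internal vertex
with a larger label, so that labels decrease away from the root) and the index `idx v` of
the child slot of `parent v` (among `0,…,s (parent v)`, left to right) containing `v`.
Distinct internal vertices occupy distinct child slots; all remaining slots are leaves. -/
structure SDecTree (n : ℕ) (s : ℕ → ℕ) where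
  parent : ℕ → ℕ
  idx : ℕ → ℕ
  parent_gt : ∀ v, 1 ≤ v → v < n → v < parent v
  parent_le : ∀ v, 1 ≤ v → v < n → parent v ≤ n
  idx_le : ∀ v, 1 ≤ v → v < n → idx v ≤ s (parent v)
  slot_inj : ∀ v w, 1 ≤ v → v < n → 1 ≤ w → w < n →
      parent v = parent w → idx v = idx w → v = w
  parent_out : ∀ v, v = 0 ∨ n ≤ v → parent v = 0
  idx_out : ∀ v, v = 0 ∨ n ≤ v → idx v = 0

namespace SDecTree

variable {n : ℕ} {s : ℕ → ℕ}

/-- `y` is a weak ancestor of `x`, i.e. `x` is a labeled vertex of the subtree `T^y`. -/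
def Descend (T : SDecTree n s) (x y : ℕ) : Prop :=
  ∃ k, T.parent^[k] x = y ∧ ∀ m ≤ k, 1 ≤ T.parent^[m] x ∧ T.parent^[m] x ≤ n

/-- `x` is a labeled vertex of the subtree `T^y_j` rooted at the `j`-th child of `y`. -/
def InSub (T : SDecTree n s) (y j x : ℕ) : Prop :=
  ∃ c, T.Descend x c ∧ T.parent c = y ∧ T.idx c = j

/-- `x` lies strictly left of `y` in the planar tree `T`. -/
def LeftOf (T : SDecTree n s) (x y : ℕ) : Prop :=
  ∃ z j₁ j₂, j₁ < j₂ ∧ T.InSub z j₁ x ∧ T.InSub z j₂ y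

/-- The cardinality `#_T(y,x)` of the pair `(y,x)`: it is `j` if `x ∈ T^y_j`
(so `0` if `x ∈ T^y_0` and `s y` if `x ∈ T^y_{s y}`), `0` if `x` is left of `y`, and
`s y` if `x` is right of `y`; it is `0` for out-of-range pairs. -/
noncomputable def card (T : SDecTree n s) (y x : ℕ) : ℕ :=
  if h : ∃ j, T.InSub y j x then h.choose
  else if 1 ≤ x ∧ x < y ∧ y ≤ n ∧ ¬ T.LeftOf x y then s y else 0

/-- `x` is a labeled vertex of `T^a ∖ 0`, i.e. of `T^a` with `T^a_0` replaced by a leaf. -/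
def InSubMinus0 (T : SDecTree n s) (a x : ℕ) : Prop :=
  x = a ∨ ∃ j, 0 < j ∧ T.InSub a j x

/-- `(a,b)` is a tree ascent of `T`. -/
def TreeAscent (T : SDecTree n s) (a b : ℕ) : Prop :=
  1 ≤ a ∧ a < b ∧ b ≤ n ∧
  (∃ i, i < s b ∧ T.InSub b i a) ∧
  (∀ e j, a < e → e < b → T.InSub e j a → j = s e) ∧
  (0 < s a → ∀ x, ¬ T.InSub a (s a) x)

end SDecTree

/-- A multi-inversion set (encoded by its multiplicity function) is transitive:
if `a < b < c` then `#(b,a) = 0` or `#(c,a) ≥ #(c,b)`. -/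
def IsTransitiveInv (I : ℕ → ℕ → ℕ) : Prop :=
  ∀ a b c, a < b → b < c → I b a = 0 ∨ I c b ≤ I c a

/-- The transitive closure of a multi-inversion set: the smallest (by inclusion, i.e.
pointwise on multiplicities) transitive multi-inversion set containing it. -/
noncomputable def tcInv (I : ℕ → ℕ → ℕ) : ℕ → ℕ → ℕ := fun y x =>
  sInf {m | ∃ J : ℕ → ℕ → ℕ, IsTransitiveInv J ∧ (∀ y' x', I y' x' ≤ J y' x') ∧ J y x = m}

/-- Add one copy of the inversion `(b,a)` to `I`, capping the multiplicity at `s b`. -/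
def addInv (s : ℕ → ℕ) (I : ℕ → ℕ → ℕ) (b a : ℕ) : ℕ → ℕ → ℕ := fun y x =>
  if y = b ∧ x = a then min (I y x + 1) (s y) else I y x

namespace SDecTree

variable {n : ℕ} {s : ℕ → ℕ}

/-- The `s`-weak order: `T ⪯ Z` iff `#_T(y,x) ≤ #_Z(y,x)` for all pairs. -/
def wle (T Z : SDecTree n s) : Prop := ∀ y x, T.card y x ≤ Z.card y x

/-- Strict `s`-weak order. -/
def wlt (T Z : SDecTree n s) : Prop := wle T Z ∧ ¬ wle Z T

/-- Cover relation in the `s`-weak order. -/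
def wcov (T Z : SDecTree n s) : Prop := wlt T Z ∧ ∀ U, wlt T U → wlt U Z → False

/-- `W` is the join of `T` and `Z` in the `s`-weak order. -/
def IsJoin (T Z W : SDecTree n s) : Prop :=
  wle T W ∧ wle Z W ∧ ∀ U, wle T U → wle Z U → wle W U

/-- `Z` is the `s`-tree rotation of `T` along the tree ascent `(a,b)`, i.e.
`inv Z = (inv T + (b,a))^tc`. -/
def IsRotation (T Z : SDecTree n s) (a b : ℕ) : Prop :=
  T.TreeAscent a b ∧
  ∀ y x, 1 ≤ x → x < y → y ≤ n → Z.card y x = tcInv (addInv s T.card b a) y x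

/-- The set `A_T(a,b)` of inversions added by a rotation producing `Z`: the pairs `(f,e)`
with `#_Z(f,e) > #_T(f,e)`. -/
def Aset (T Z : SDecTree n s) : Set (ℕ × ℕ) :=
  {p | T.card p.1 p.2 < Z.card p.1 p.2}

/-- The set `A_T(a,b)` described directly via the transitive closure. -/
def ARot (T : SDecTree n s) (a b : ℕ) : Set (ℕ × ℕ) :=
  {p | T.card p.1 p.2 < tcInv (addInv s T.card b a) p.1 p.2}

/-- The set `F_T(a,c)` (here `b` and `d` are the partners of `a` and `c` in the
respective tree ascents `(a,b)` and `(c,d)`): it is `{(d,e) : e ∈ T^a∖0}` if `b = c`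
and `a ∈ T^c_0`, and empty otherwise. -/
def Fset (T : SDecTree n s) (a b c d : ℕ) : Set (ℕ × ℕ) :=
  {p | b = c ∧ T.InSub c 0 a ∧ p.1 = d ∧ T.InSubMinus0 a p.2}

/-- `T` is an `s`-Tamari tree: `#_T(c,a) ≤ #_T(c,b)` whenever `a < b < c`. -/
def IsTamari (T : SDecTree n s) : Prop :=
  ∀ a b c, a < b → b < c → T.card c a ≤ T.card c b

/-- `(a,b)` is a Tamari tree ascent of `T`: `a` is a non-rightmost child of `b`. -/
def TamariAscent (T : SDecTree n s) (a b : ℕ) : Prop :=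
  1 ≤ a ∧ a < n ∧ T.parent a = b ∧ T.card b a < s b

/-- `Z` is the `s`-Tamari rotation of `T` along the Tamari tree ascent `(a,b)`. -/
def IsTamRotation (T Z : SDecTree n s) (a b : ℕ) : Prop :=
  T.TamariAscent a b ∧
  ∀ y x, 1 ≤ x → x < y → y ≤ n → Z.card y x = tcInv (addInv s T.card b a) y x

/-- Cover relation in the `s`-Tamari lattice. -/
def tamcov (T Z : SDecTree n s) : Prop :=
  IsTamari T ∧ IsTamari Z ∧ wlt T Z ∧ ∀ U, IsTamari U → wlt T U → wlt U Z → False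

/-- `W` is the join of `T` and `Z` in the `s`-Tamari lattice. -/
def IsTamJoin (T Z W : SDecTree n s) : Prop :=
  IsTamari W ∧ wle T W ∧ wle Z W ∧ ∀ U, IsTamari U → wle T U → wle Z U → wle W U

/-- The open interval `(T,Z)` in the `s`-weak order. -/
def OpenInterval (T Z : SDecTree n s) : Set (SDecTree n s) := {U | wlt T U ∧ wlt U Z}

/-- A set of trees forming a chain in the `s`-weak order. -/
def IsChainSet (C : Set (SDecTree n s)) : Prop :=
  C.Pairwise fun U V => wlt U V ∨ wlt V U

/-- The geometric realization of the order complex `Δ(T,Z)` of the open interval `(T,Z)`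
in the `s`-weak order: the space of finitely supported probability vectors on the vertex
set whose support is a chain of the open interval. -/
def orderComplex (T Z : SDecTree n s) : Set (SDecTree n s → ℝ) :=
  {f | (∀ U, 0 ≤ f U) ∧ (Function.support f).Finite ∧
    Function.support f ⊆ OpenInterval T Z ∧ IsChainSet (Function.support f) ∧
    ∑ᶠ U, f U = 1}

/-- The geometric realization of the order complex of the open interval `(T,Z)` in the
`s`-Tamari lattice. -/
def tamOrderComplex (T Z : SDecTree n s) : Set (SDecTree n s → ℝ) :=
  {f | (∀ U, 0 ≤ f U) ∧ (Function.support f).Finite ∧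
    Function.support f ⊆ {U | IsTamari U ∧ wlt T U ∧ wlt U Z} ∧
    IsChainSet (Function.support f) ∧ ∑ᶠ U, f U = 1}

end SDecTree

/-- The list of labels of the consecutive cover relations along a saturated chain,
recorded as a list of poset elements. -/
def labelsOf {α : Type*} (lab : α → α → ℕ) (L : List α) : List ℕ :=
  (L.zip L.tail).map fun p => lab p.1 p.2

/-!
When `s a = 0`, the multi-inversion set `inv T + (b,a)` is already transitive, so the rotation
adds nothing beyond `(b,a)` itself. The transitivity constraints involving the modified entry
`#(b,a)` are of three kinds: `#(a,x)` for `x < a`, which is `0` because `s a = 0`; `#(c,a)`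
against `#(c,b)` for `c > b`, which agree because `a` lies below `b`; and `#(y,a)` against
`#(b,y)` for `a < y < b`, which is inherited from the transitivity of `inv T` since
`#(b,a)` only grows.
-/

open Relation

namespace SDecTree

variable {n : ℕ} {s : ℕ → ℕ}

def ParentStep (T : SDecTree n s) (u v : ℕ) : Prop :=
  1 ≤ u ∧ u < n ∧ T.parent u = v

section Descend

variable {T : SDecTree n s} {x y z : ℕ}

lemma ParentStep.lt (h : T.ParentStep x y) : x < y :=
  h.2.2 ▸ T.parent_gt x h.1 h.2.1

lemma ParentStep.le_root (h : T.ParentStep x y) : y ≤ n :=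
  h.2.2 ▸ T.parent_le x h.1 h.2.1

lemma rightUnique_parentStep : Relator.RightUnique T.ParentStep :=
  fun _ _ _ h h' => h.2.2.symm.trans h'.2.2

theorem descend_iff : T.Descend x y ↔ 1 ≤ x ∧ x ≤ n ∧ ReflTransGen T.ParentStep x y := by
  constructor
  · rintro ⟨k, rfl, hk⟩
    induction k generalizing x with
    | zero =>
      obtain ⟨hx1, hxn⟩ := hk 0 le_rfl
      exact ⟨hx1, hxn, .refl⟩
    | succ k ih =>
      have h0 := hk 0 (Nat.zero_le _)
      have h1 := hk 1 (by omega)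
      simp only [Function.iterate_zero_apply, Function.iterate_one] at h0 h1
      have hxn : x < n := by
        by_contra hc
        rw [T.parent_out x (Or.inr (not_lt.mp hc))] at h1
        omega
      obtain ⟨-, -, h⟩ := ih fun m hm => by
        rw [← Function.iterate_succ_apply]
        exact hk (m + 1) (by omega)
      exact ⟨h0.1, h0.2, .head ⟨h0.1, hxn, rfl⟩ h⟩
  · rintro ⟨hx1, hxn, h⟩
    induction h with
    | refl =>
      refine ⟨0, rfl, fun m hm => ?_⟩
      obtain rfl := Nat.le_zero.1 hm
      exact ⟨hx1, hxn⟩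
    | @tail u v _ hstep ih =>
      obtain ⟨k, hk, hv⟩ := ih
      have hlast : T.parent^[k + 1] x = v := by rw [Function.iterate_succ_apply', hk, hstep.2.2]
      refine ⟨k + 1, hlast, fun m hm => ?_⟩
      rcases hm.lt_or_eq with hm | rfl
      · exact hv m (by omega)
      · have hk1 := (hv k le_rfl).1
        rw [hk] at hk1
        rw [hlast]
        exact ⟨hk1.trans hstep.lt.le, hstep.le_root⟩

lemma ParentStep.descend (h : T.ParentStep x y) : T.Descend x y :=
  descend_iff.2 ⟨h.1, h.lt.le.trans h.le_root, .single h⟩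

lemma descend_refl (T : SDecTree n s) (hx1 : 1 ≤ x) (hxn : x ≤ n) : T.Descend x x :=
  descend_iff.2 ⟨hx1, hxn, .refl⟩

lemma Descend.le (h : T.Descend x y) : x ≤ y := by
  obtain ⟨-, -, hxy⟩ := descend_iff.1 h
  clear h
  induction hxy with
  | refl => exact le_rfl
  | tail _ hstep ih => exact ih.trans hstep.lt.le

lemma Descend.one_le_left (h : T.Descend x y) : 1 ≤ x :=
  (descend_iff.1 h).1

lemma Descend.one_le_right (h : T.Descend x y) : 1 ≤ y :=
  h.one_le_left.trans h.le

lemma Descend.le_root (h : T.Descend x y) : y ≤ n := by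
  obtain ⟨-, hxn, hxy⟩ := descend_iff.1 h
  rcases hxy.cases_tail with rfl | ⟨_, -, hstep⟩
  exacts [hxn, hstep.le_root]

lemma Descend.trans (h₁ : T.Descend x y) (h₂ : T.Descend y z) : T.Descend x z := by
  obtain ⟨hx1, hxn, hxy⟩ := descend_iff.1 h₁
  exact descend_iff.2 ⟨hx1, hxn, hxy.trans (descend_iff.1 h₂).2.2⟩

lemma Descend.antisymm (h₁ : T.Descend x y) (h₂ : T.Descend y x) : x = y :=
  le_antisymm h₁.le h₂.le

lemma Descend.total (h₁ : T.Descend x y) (h₂ : T.Descend x z) :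
    T.Descend y z ∨ T.Descend z y :=
  ((descend_iff.1 h₁).2.2.total_of_right_unique rightUnique_parentStep
    (descend_iff.1 h₂).2.2).imp
    (fun h => descend_iff.2 ⟨h₁.one_le_right, h₁.le_root, h⟩)
    (fun h => descend_iff.2 ⟨h₂.one_le_right, h₂.le_root, h⟩)

lemma Descend.exists_parentStep (h : T.Descend x y) (hne : x ≠ y) :
    ∃ c, T.Descend x c ∧ T.ParentStep c y := by
  obtain ⟨hx1, hxn, hxy⟩ := descend_iff.1 h
  rcases hxy.cases_tail with rfl | ⟨c, hxc, hstep⟩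
  · exact absurd rfl hne
  · exact ⟨c, descend_iff.2 ⟨hx1, hxn, hxc⟩, hstep⟩

lemma Descend.parent_descend (h : T.Descend x y) (hne : x ≠ y) :
    T.Descend (T.parent x) y := by
  obtain ⟨-, -, hxy⟩ := descend_iff.1 h
  rcases hxy.cases_head with rfl | ⟨c, hstep, hcy⟩
  · exact absurd rfl hne
  · obtain rfl := hstep.2.2
    exact descend_iff.2 ⟨hstep.1.trans hstep.lt.le, hstep.le_root, hcy⟩

lemma descend_root (T : SDecTree n s) (hx1 : 1 ≤ x) (hxn : x ≤ n) : T.Descend x n := by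
  obtain ⟨k, hk⟩ : ∃ k, n - x ≤ k := ⟨_, le_rfl⟩
  induction k generalizing x with
  | zero =>
    obtain rfl : x = n := by omega
    exact T.descend_refl hx1 hxn
  | succ k ih =>
    rcases hxn.lt_or_eq with hxn' | rfl
    · have hstep : T.ParentStep x (T.parent x) := ⟨hx1, hxn', rfl⟩
      have := hstep.lt
      exact hstep.descend.trans (ih (by omega) hstep.le_root (by omega))
    · exact T.descend_refl hx1 le_rfl

end Descend

section InSub

variable {T : SDecTree n s} {x y z w j j' jx jy : ℕ}

lemma InSub.exists_parentStep (h : T.InSub y j x) (hy : 1 ≤ y) :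
    ∃ c, T.Descend x c ∧ T.ParentStep c y ∧ T.idx c = j := by
  obtain ⟨c, hxc, hcy, hc⟩ := h
  have hcn : c < n := by
    by_contra hcn
    rw [T.parent_out c (Or.inr (not_lt.mp hcn))] at hcy
    omega
  exact ⟨c, hxc, ⟨hxc.one_le_right, hcn, hcy⟩, hc⟩

-- `InSub 0 0 x` holds for every vertex `x`, because the root `n` has `parent n = 0`.
lemma InSub.slot_eq_zero (h : T.InSub 0 j x) : j = 0 := by
  obtain ⟨c, hxc, hcy, rfl⟩ := h
  by_cases hcn : c < n
  · have := T.parent_gt c hxc.one_le_right hcn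
    omega
  · exact T.idx_out c (Or.inr (not_lt.mp hcn))

lemma InSub.descend (h : T.InSub y j x) (hy : 1 ≤ y) : T.Descend x y := by
  obtain ⟨c, hxc, hcy, -⟩ := h.exists_parentStep hy
  exact hxc.trans hcy.descend

lemma InSub.lt (h : T.InSub y j x) (hy : 1 ≤ y) : x < y := by
  obtain ⟨c, hxc, hcy, -⟩ := h.exists_parentStep hy
  exact hxc.le.trans_lt hcy.lt

lemma InSub.slot_le (h : T.InSub y j x) : j ≤ s y := by
  rcases Nat.eq_zero_or_pos y with rfl | hy
  · simp [h.slot_eq_zero]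
  · obtain ⟨c, -, ⟨hc1, hcn, rfl⟩, rfl⟩ := h.exists_parentStep hy
    exact T.idx_le c hc1 hcn

lemma InSub.of_descend (hxw : T.Descend x w) (h : T.InSub y j w) : T.InSub y j x := by
  obtain ⟨c, hwc, hcy, hc⟩ := h
  exact ⟨c, hxw.trans hwc, hcy, hc⟩

lemma Descend.exists_inSub (h : T.Descend x y) (hne : x ≠ y) : ∃ j, T.InSub y j x := by
  obtain ⟨c, hxc, hcy⟩ := h.exists_parentStep hne
  exact ⟨T.idx c, c, hxc, hcy.2.2, rfl⟩

lemma eq_of_descend_of_parentStep {c c' : ℕ} (hxc : T.Descend x c) (hc : T.ParentStep c y)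
    (hxc' : T.Descend x c') (hc' : T.ParentStep c' y) : c = c' := by
  have key : ∀ {c c'}, T.Descend c c' → T.ParentStep c y → T.ParentStep c' y → c = c' := by
    intro c c' hcc' hc hc'
    by_contra hne
    have hyc' := hcc'.parent_descend hne
    rw [hc.2.2] at hyc'
    have := hc'.lt
    have := hyc'.le
    omega
  rcases hxc.total hxc' with h | h
  exacts [key h hc hc', (key h hc' hc).symm]

lemma InSub.unique (h : T.InSub y j x) (h' : T.InSub y j' x) : j = j' := by
  rcases Nat.eq_zero_or_pos y with rfl | hy
  · rw [h.slot_eq_zero, h'.slot_eq_zero]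
  · obtain ⟨c, hxc, hc, rfl⟩ := h.exists_parentStep hy
    obtain ⟨c', hxc', hc', rfl⟩ := h'.exists_parentStep hy
    rw [eq_of_descend_of_parentStep hxc hc hxc' hc']

lemma exists_meet (T : SDecTree n s) (hx1 : 1 ≤ x) (hxn : x ≤ n) (hy1 : 1 ≤ y)
    (hyn : y ≤ n) :
    ∃ z, T.Descend x z ∧ T.Descend y z ∧
      ∀ w, T.Descend x w → T.Descend y w → T.Descend z w := by
  set A := {z | T.Descend x z ∧ T.Descend y z}
  have hA : A.Nonempty := ⟨n, T.descend_root hx1 hxn, T.descend_root hy1 hyn⟩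
  obtain ⟨hxz, hyz⟩ := Nat.sInf_mem hA
  refine ⟨sInf A, hxz, hyz, fun w hxw hyw => ?_⟩
  rcases hxz.total hxw with h | h
  · exact h
  · obtain rfl : w = sInf A := le_antisymm h.le (Nat.sInf_le ⟨hxw, hyw⟩)
    exact h

lemma descend_or_separated (T : SDecTree n s) (hx1 : 1 ≤ x) (hxy : x < y) (hyn : y ≤ n) :
    T.Descend x y ∨ ∃ z jx jy, jx ≠ jy ∧ T.InSub z jx x ∧ T.InSub z jy y := by
  refine or_iff_not_imp_left.2 fun hnd => ?_
  obtain ⟨z, hxz, hyz, hmin⟩ := T.exists_meet hx1 (by omega) (by omega) hyn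
  have hxz' : x ≠ z := by
    rintro rfl
    exact absurd hyz.le (by omega)
  have hyz' : y ≠ z := by
    rintro rfl
    exact hnd hxz
  obtain ⟨cx, hxc, hcx⟩ := hxz.exists_parentStep hxz'
  obtain ⟨cy, hyc, hcy⟩ := hyz.exists_parentStep hyz'
  have hne : cx ≠ cy := by
    rintro rfl
    have := (hmin cx hxc hyc).le
    have := hcx.lt
    omega
  refine ⟨z, T.idx cx, T.idx cy, fun h => hne ?_, ⟨cx, hxc, hcx.2.2, rfl⟩,
    ⟨cy, hyc, hcy.2.2, rfl⟩⟩
  exact T.slot_inj cx cy hcx.1 hcx.2.1 hcy.1 hcy.2.1 (hcx.2.2.trans hcy.2.2.symm) h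

lemma InSub.one_le_of_ne (hx : T.InSub z jx x) (hy : T.InSub z jy y) (hne : jx ≠ jy) :
    1 ≤ z := by
  by_contra h
  obtain rfl : z = 0 := by omega
  exact hne (hx.slot_eq_zero.trans hy.slot_eq_zero.symm)

lemma descend_of_separated (hx : T.InSub z jx x) (hy : T.InSub z jy y) (hne : jx ≠ jy)
    (hxw : T.Descend x w) (hyw : T.Descend y w) : T.Descend z w := by
  rcases (hx.descend (hx.one_le_of_ne hy hne)).total hxw with h | h
  · exact h
  rcases eq_or_ne w z with rfl | hwz
  · exact h
  obtain ⟨d, hwd, hd⟩ := h.exists_parentStep hwz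
  have hxd : T.InSub z (T.idx d) x := ⟨d, hxw.trans hwd, hd.2.2, rfl⟩
  have hyd : T.InSub z (T.idx d) y := ⟨d, hyw.trans hwd, hd.2.2, rfl⟩
  exact absurd ((hx.unique hxd).trans (hy.unique hyd).symm) hne

lemma Descend.slot_eq (hxy : T.Descend x y) (hx : T.InSub z jx x) (hy : T.InSub z jy y) :
    jx = jy := by
  by_contra hne
  have hzy := descend_of_separated hx hy hne hxy (T.descend_refl hxy.one_le_right hxy.le_root)
  have := hy.lt (hx.one_le_of_ne hy hne)
  have := hzy.le
  omega

lemma leftOf_iff (hx : T.InSub z jx x) (hy : T.InSub z jy y) (hne : jx ≠ jy) :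
    T.LeftOf x y ↔ jx < jy := by
  refine ⟨fun ⟨z', jx', jy', hlt, hx', hy'⟩ => ?_, fun h => ⟨z, jx, jy, h, hx, hy⟩⟩
  have hz := hx.one_le_of_ne hy hne
  have hz' := hx'.one_le_of_ne hy' hlt.ne
  obtain rfl : z = z' :=
    (descend_of_separated hx hy hne (hx'.descend hz') (hy'.descend hz')).antisymm
      (descend_of_separated hx' hy' hlt.ne (hx.descend hz) (hy.descend hz))
  rwa [hx.unique hx', hy.unique hy']

end InSub

section Card

variable (T : SDecTree n s) {x y z u w j j' jx jy : ℕ}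

lemma card_le (y x : ℕ) : T.card y x ≤ s y := by
  rw [card]
  split_ifs with h
  · exact h.choose_spec.slot_le
  · exact le_rfl
  · exact Nat.zero_le _

lemma card_of_inSub (h : T.InSub y j x) : T.card y x = j := by
  have hex : ∃ j, T.InSub y j x := ⟨j, h⟩
  rw [card, dif_pos hex]
  exact hex.choose_spec.unique h

lemma card_out (h : ¬ (1 ≤ x ∧ x < y ∧ y ≤ n)) : T.card y x = 0 := by
  rw [card]
  split_ifs with hex hrange
  · rcases Nat.eq_zero_or_pos y with rfl | hy
    · exact hex.choose_spec.slot_eq_zero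
    · have hxy := hex.choose_spec.descend hy
      exact absurd ⟨hxy.one_le_left, hex.choose_spec.lt hy, hxy.le_root⟩ h
  · exact absurd ⟨hrange.1, hrange.2.1, hrange.2.2.1⟩ h
  · rfl

lemma card_of_separated (hx1 : 1 ≤ x) (hxy : x < y) (hyn : y ≤ n)
    (hx : T.InSub z jx x) (hy : T.InSub z jy y) (hne : jx ≠ jy) :
    T.card y x = if jx < jy then 0 else s y := by
  have hnot : ¬ ∃ j, T.InSub y j x := fun ⟨_, hj⟩ =>
    hne ((hj.descend (by omega)).slot_eq hx hy)
  rw [card, dif_neg hnot, leftOf_iff hx hy hne]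
  by_cases h : jx < jy <;> simp [h, hx1, hxy, hyn]

lemma card_eq_of_same_slot (hx1 : 1 ≤ x) (hy1 : 1 ≤ y) (hxz : x < z) (hyz : y < z)
    (hzn : z ≤ n) (hx : T.InSub u j x) (hy : T.InSub u j y) (hz : T.InSub u j' z)
    (hne : j ≠ j') : T.card z x = T.card z y := by
  rw [T.card_of_separated hx1 hxz hzn hx hz hne, T.card_of_separated hy1 hyz hzn hy hz hne]

lemma card_eq_of_descend (hxw : T.Descend x w) (hwz : w < z) : T.card z x = T.card z w := by
  have hx1 := hxw.one_le_left
  have hw1 := hxw.one_le_right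
  by_cases hzn : z ≤ n
  swap
  · rw [T.card_out (by omega), T.card_out (by omega)]
  rcases T.descend_or_separated hw1 hwz hzn with hwz' | ⟨u, jw, jz, hne, hwu, hzu⟩
  · obtain ⟨j, hj⟩ := hwz'.exists_inSub hwz.ne
    rw [T.card_of_inSub (hj.of_descend hxw), T.card_of_inSub hj]
  · exact T.card_eq_of_same_slot hx1 hw1 (hxw.le.trans_lt hwz) hwz hzn
      (hwu.of_descend hxw) hwu hzu hne

lemma card_le_card_of_separated (hx1 : 1 ≤ x) (hxy : x < y) (hyz : y < z) (hzn : z ≤ n)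
    (hx : T.InSub w jx x) (hy : T.InSub w jy y) (hlt : jy < jx) :
    T.card z y ≤ T.card z x := by
  have hw1 := hx.one_le_of_ne hy hlt.ne'
  rcases lt_trichotomy z w with hzw | rfl | hwz
  · rcases T.descend_or_separated (by omega) hzw (hx.descend hw1).le_root with
      hzw' | ⟨u, jz, jw, hne, hzu, hwu⟩
    · obtain ⟨jz, hz⟩ := hzw'.exists_inSub hzw.ne
      by_cases hjz : jz ≤ jy
      · rw [T.card_of_separated hx1 (hxy.trans hyz) hzn hx hz (by omega), if_neg (by omega)]
        exact T.card_le z y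
      · rw [T.card_of_separated (by omega) hyz hzn hy hz (by omega), if_pos (by omega)]
        exact Nat.zero_le _
    -- `w ∉ T^z`, so seen from `z` the vertices `x` and `y` lie on the same side
    · exact (T.card_eq_of_same_slot (by omega) hx1 hyz (hxy.trans hyz) hzn
        (hwu.of_descend (hy.descend hw1)) (hwu.of_descend (hx.descend hw1)) hzu hne.symm).le
  · rw [T.card_of_inSub hx, T.card_of_inSub hy]
    exact hlt.le
  · rw [T.card_eq_of_descend (hx.descend hw1) hwz, T.card_eq_of_descend (hy.descend hw1) hwz]

theorem isTransitiveInv_card : IsTransitiveInv T.card := by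
  intro x y z hxy hyz
  by_cases hx1 : 1 ≤ x
  swap
  · exact Or.inl (T.card_out (by omega))
  by_cases hzn : z ≤ n
  swap
  · exact Or.inr (by rw [T.card_out (x := y) (by omega)]; exact Nat.zero_le _)
  refine or_iff_not_imp_left.2 fun hyx => ?_
  rcases T.descend_or_separated hx1 hxy (by omega) with hxy' | ⟨w, jx, jy, hne, hx, hy⟩
  · exact (T.card_eq_of_descend hxy' hyz).ge
  · rw [T.card_of_separated hx1 hxy (by omega) hx hy hne] at hyx
    exact T.card_le_card_of_separated hx1 hxy hyz hzn hx hy (by split_ifs at hyx with h <;> omega)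

end Card

end SDecTree

lemma IsTransitiveInv.tcInv_eq {I : ℕ → ℕ → ℕ} (hI : IsTransitiveInv I) :
    tcInv I = I := by
  funext y x
  have hmem : ∃ J, IsTransitiveInv J ∧ (∀ y' x', I y' x' ≤ J y' x') ∧ J y x = I y x :=
    ⟨I, hI, fun _ _ => le_rfl, rfl⟩
  refine le_antisymm (Nat.sInf_le hmem) (le_csInf ⟨_, hmem⟩ ?_)
  rintro _ ⟨J, -, hIJ, rfl⟩
  exact hIJ y x

lemma isTransitiveInv_addInv {s : ℕ → ℕ} {I : ℕ → ℕ → ℕ} {a b : ℕ}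
    (hI : IsTransitiveInv I) (hIs : ∀ y x, I y x ≤ s y) (hsa : s a = 0)
    (hbelow : ∀ c, b < c → I c b ≤ I c a) :
    IsTransitiveInv (addInv s I b a) := by
  have hJ : ∀ {y x}, ¬(y = b ∧ x = a) → addInv s I b a y x = I y x := fun h => if_neg h
  have hJba : addInv s I b a b a = min (I b a + 1) (s b) := if_pos ⟨rfl, rfl⟩
  intro x y z hxy hyz
  have hxyz := hI x y z hxy hyz
  by_cases hyx : y = b ∧ x = a
  · rw [hJ (by omega : ¬(z = b ∧ y = a)), hJ (by omega : ¬(z = b ∧ x = a)), hyx.1, hyx.2]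
    exact Or.inr (hbelow z (by omega))
  by_cases hzy : z = b ∧ y = a
  · rw [hJ hyx, hzy.2]
    exact Or.inl (Nat.eq_zero_of_le_zero (hsa ▸ hIs a x))
  by_cases hzx : z = b ∧ x = a
  · obtain ⟨rfl, rfl⟩ := hzx
    rw [hJ hyx, hJ hzy, hJba]
    exact hxyz.imp_right fun h => le_min (h.trans (Nat.le_succ _)) (hIs z y)
  · rw [hJ hyx, hJ hzy, hJ hzx]
    exact hxyz

/-- if `(a,b)` is a tree ascent of `T` with `s a = 0` and `Z` is the
`s`-tree rotation of `T` along `(a,b)`, then `A_T(a,b) = {(b,a)}`. -/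
theorem inversions_added_zero (n : ℕ) (s : ℕ → ℕ) (T Z : SDecTree n s) (a b : ℕ)
    (hrot : SDecTree.IsRotation T Z a b) (hsa : s a = 0) :
    SDecTree.Aset T Z = {(b, a)} := by
  obtain ⟨⟨h1a, hab, hbn, ⟨i, his, hin⟩, -, -⟩, hZ⟩ := hrot
  have hbelow : ∀ c, b < c → T.card c b ≤ T.card c a := fun c hbc =>
    (T.card_eq_of_descend (hin.descend (by omega)) hbc).ge
  have hclosure : tcInv (addInv s T.card b a) = addInv s T.card b a :=
    (isTransitiveInv_addInv T.isTransitiveInv_card T.card_le hsa hbelow).tcInv_eq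
  ext ⟨y, x⟩
  simp only [SDecTree.Aset, Set.mem_ofPred_eq, Set.mem_singleton_iff, Prod.mk.injEq]
  by_cases hr : 1 ≤ x ∧ x < y ∧ y ≤ n
  · rw [hZ y x hr.1 hr.2.1 hr.2.2, hclosure, addInv]
    split_ifs with h
    · obtain ⟨rfl, rfl⟩ := h
      rw [T.card_of_inSub hin]
      omega
    · simpa using h
  · rw [Z.card_out hr]
    simp only [Nat.not_lt_zero, false_iff]
    rintro ⟨rfl, rfl⟩
    exact hr ⟨h1a, hab, hbn⟩
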